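/- Let H be a real Hilbert space, T : H → H a compact self-adjoint positive semidefinite injective operator, and 0 < α ≤ 1. Suppose h ∈ H lies in the range of T^α, i.e. h = T^α g for some g ∈ H. Then for all λ > 0, ‖T (λ I + T)⁻¹ h − h‖ ≤ λ^α ‖g‖. -/
import Mathlib


open MeasureTheory RealInnerProductSpace

/-- Key scalar inequality: `l * μ^α ≤ l^α * (l + μ)` for `l, μ > 0`, `0 < α ≤ 1`. -/
lemma aux_key {l m α : ℝ} (hl : 0 < l) (hm : 0 < m) (hα : 0 < α) (hα1 : α ≤ 1) :
    l * m ^ α ≤ l ^ α * (l + m) := by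
  rcases le_total m l with hml | hlm
  · have h1 : m ^ α ≤ l ^ α := Real.rpow_le_rpow hm.le hml hα.le
    have h2 : l * m ^ α ≤ l * l ^ α := by
      exact mul_le_mul_of_nonneg_left h1 hl.le
    have h3 : l * l ^ α ≤ l ^ α * (l + m) := by
      have : l ≤ l + m := by linarith
      calc l * l ^ α = l ^ α * l := by ring
        _ ≤ l ^ α * (l + m) := mul_le_mul_of_nonneg_left this (Real.rpow_nonneg hl.le α)
    linarith
  · -- l ≤ m : show l * m^α ≤ l^α * m, then m ≤ l + m
    have h1 : l ^ (1 - α) ≤ m ^ (1 - α) :=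
      Real.rpow_le_rpow hl.le hlm (by linarith)
    have hll : l = l ^ α * l ^ (1 - α) := by
      rw [← Real.rpow_add hl]; norm_num
    have hmm : m = m ^ α * m ^ (1 - α) := by
      rw [← Real.rpow_add hm]; norm_num
    have h2 : l * m ^ α ≤ l ^ α * m := by
      calc l * m ^ α = l ^ α * l ^ (1 - α) * m ^ α := by rw [← hll]
        _ ≤ l ^ α * m ^ (1 - α) * m ^ α := by
            apply mul_le_mul_of_nonneg_right _ (Real.rpow_nonneg hm.le α)
            exact mul_le_mul_of_nonneg_left h1 (Real.rpow_nonneg hl.le α)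
        _ = l ^ α * (m ^ α * m ^ (1 - α)) := by ring
        _ = l ^ α * m := by rw [← hmm]
    have h3 : l ^ α * m ≤ l ^ α * (l + m) :=
      mul_le_mul_of_nonneg_left (by linarith) (Real.rpow_nonneg hl.le α)
    linarith

/-- Quantitative Tikhonov error under a source condition: if `T` is compact, self-adjoint,
positive semidefinite and injective, with eigendecomposition `T eᵢ = μᵢ eᵢ` (μᵢ > 0) in a
Hilbert basis `e`, and `h = T^α g` (expressed spectrally as `⟨h, eᵢ⟩ = μᵢ^α ⟨g, eᵢ⟩`) for some
`0 < α ≤ 1`, then for every `λ > 0` the Tikhonov approximation `v_λ = T(λI + T)⁻¹ h`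
satisfies `‖T v_λ - h‖ ≤ λ^α ‖g‖`. -/
theorem stmt10 {H : Type*} [NormedAddCommGroup H] [InnerProductSpace ℝ H] [CompleteSpace H]
    (T : H →L[ℝ] H) (hcomp : IsCompactOperator T) (hsa : IsSelfAdjoint T)
    (hpsd : ∀ v, 0 ≤ ⟪T v, v⟫) (hinj : ∀ v, T v = 0 → v = 0)
    {ι : Type*} (e : HilbertBasis ι ℝ H) (μ : ι → ℝ)
    (heig : ∀ i, T (e i) = μ i • e i) (hμpos : ∀ i, 0 < μ i)
    (α : ℝ) (hα : 0 < α) (hα1 : α ≤ 1) (g h : H)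
    (hsource : ∀ i, ⟪h, e i⟫ = μ i ^ α * ⟪g, e i⟫) :
    ∀ l : ℝ, 0 < l → ∀ v : H, l • v + T v = h → ‖T v - h‖ ≤ l ^ α * ‖g‖ := by
  intro l hl v hv
  have hsym : ∀ x y : H, ⟪T x, y⟫ = ⟪x, T y⟫ :=
    fun x y => (ContinuousLinearMap.isSelfAdjoint_iff_isSymmetric.mp hsa) x y
  -- coefficient formula
  have hcoef : ∀ i, (l + μ i) * ⟪v, e i⟫ = μ i ^ α * ⟪g, e i⟫ := by
    intro i
    have h1 : ⟪l • v + T v, e i⟫ = ⟪h, e i⟫ := by rw [hv]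
    have h2 : ⟪T v, e i⟫ = μ i * ⟪v, e i⟫ := by
      rw [hsym v (e i), heig i, real_inner_smul_right]
    rw [inner_add_left, real_inner_smul_left, h2, hsource] at h1
    linarith [h1]
  have key : ∀ i, |l * ⟪v, e i⟫| ≤ l ^ α * |⟪g, e i⟫| := by
    intro i
    have hlm : 0 < l + μ i := by linarith [hμpos i]
    have habs : (l + μ i) * |⟪v, e i⟫| = μ i ^ α * |⟪g, e i⟫| := by
      have h0 := congrArg abs (hcoef i)
      rwa [abs_mul, abs_mul, abs_of_pos hlm,
        abs_of_nonneg (Real.rpow_nonneg (hμpos i).le α)] at h0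
    have h1 : (l + μ i) * |l * ⟪v, e i⟫| = l * μ i ^ α * |⟪g, e i⟫| := by
      rw [abs_mul, abs_of_pos hl]
      calc (l + μ i) * (l * |⟪v, e i⟫|) = l * ((l + μ i) * |⟪v, e i⟫|) := by ring
        _ = l * (μ i ^ α * |⟪g, e i⟫|) := by rw [habs]
        _ = l * μ i ^ α * |⟪g, e i⟫| := by ring
    have h2 : l * μ i ^ α * |⟪g, e i⟫| ≤ l ^ α * (l + μ i) * |⟪g, e i⟫| :=
      mul_le_mul_of_nonneg_right (aux_key hl (hμpos i) hα hα1) (abs_nonneg _)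
    have h3 : (l + μ i) * |l * ⟪v, e i⟫| ≤ (l + μ i) * (l ^ α * |⟪g, e i⟫|) := by
      rw [h1]; nlinarith [h2]
    exact le_of_mul_le_mul_left h3 hlm
  -- reduce to norm of l • v
  have hTvh : T v - h = -(l • v) := by rw [← hv]; abel
  rw [hTvh, norm_neg]
  -- Parseval comparison
  have hs1 : Summable (fun i => ⟪(l • v : H), e i⟫ * ⟪e i, (l • v : H)⟫) :=
    e.summable_inner_mul_inner _ _
  have hs2 : Summable (fun i => ⟪g, e i⟫ * ⟪e i, g⟫) :=
    e.summable_inner_mul_inner g g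
  have hs2' : Summable (fun i => (l ^ α) ^ 2 * (⟪g, e i⟫ * ⟪e i, g⟫)) := hs2.mul_left _
  have hterm : ∀ i, ⟪(l • v : H), e i⟫ * ⟪e i, (l • v : H)⟫ ≤
      (l ^ α) ^ 2 * (⟪g, e i⟫ * ⟪e i, g⟫) := by
    intro i
    have e1 : ⟪e i, (l • v : H)⟫ = l * ⟪v, e i⟫ := by
      rw [real_inner_smul_right, real_inner_comm]
    have e2 : ⟪e i, g⟫ = ⟪g, e i⟫ := real_inner_comm _ _
    have e3 : ⟪(l • v : H), e i⟫ = l * ⟪v, e i⟫ := real_inner_smul_left _ _ _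
    rw [e1, e2, e3]
    have hk := key i
    have h1 : (l * ⟪v, e i⟫) * (l * ⟪v, e i⟫) ≤ (l ^ α * |⟪g, e i⟫|) ^ 2 := by
      calc (l * ⟪v, e i⟫) * (l * ⟪v, e i⟫) = |l * ⟪v, e i⟫| ^ 2 := by
            rw [sq_abs]; ring
        _ ≤ (l ^ α * |⟪g, e i⟫|) ^ 2 := by
            apply pow_le_pow_left₀ (abs_nonneg _) hk
    calc (l * ⟪v, e i⟫) * (l * ⟪v, e i⟫) ≤ (l ^ α * |⟪g, e i⟫|) ^ 2 := h1
      _ = (l ^ α) ^ 2 * (⟪g, e i⟫ * ⟪g, e i⟫) := by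
          rw [mul_pow, sq_abs]; ring
  have hsum_le : ∑' i, ⟪(l • v : H), e i⟫ * ⟪e i, (l • v : H)⟫ ≤
      ∑' i, (l ^ α) ^ 2 * (⟪g, e i⟫ * ⟪e i, g⟫) :=
    Summable.tsum_le_tsum hterm hs1 hs2'
  rw [e.tsum_inner_mul_inner, tsum_mul_left, e.tsum_inner_mul_inner,
    real_inner_self_eq_norm_sq, real_inner_self_eq_norm_sq] at hsum_le
  have hnn : 0 ≤ l ^ α * ‖g‖ :=
    mul_nonneg (Real.rpow_nonneg hl.le α) (norm_nonneg _)
  nlinarith [norm_nonneg (l • v : H), hsum_le]
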